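/- arXiv:1906.00220 — 9 statements merged into one kernel-verified Lean document; each statement's English description precedes it below -/
import Mathlib

section
/- Let $a,b,\sigma,P>0$. Define $g(v_j,v_u) = \frac{a^2 v_u^2}{\sigma^2 + (b\sqrt{P} - a v_j)^2}$ on the feasible set $\{(v_j,v_u): v_j, v_u \ge 0,\ v_j^2 + v_u^2 \le P\}$. Then at any maximizer $(v_j^\star, v_u^\star)$ of $g$ on this set, $b\sqrt{P} - a v_j^\star \ge 0$. -/
theorem stmt_0 (a b σ P : ℝ) (ha : 0 < a) (hb : 0 < b) (hσ : 0 < σ) (hP : 0 < P)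
    (g : ℝ → ℝ → ℝ)
    (hg : ∀ vj vu, g vj vu = a ^ 2 * vu ^ 2 / (σ ^ 2 + (b * Real.sqrt P - a * vj) ^ 2))
    (vj vu : ℝ) (hvj : 0 ≤ vj) (hvu : 0 ≤ vu) (hfeas : vj ^ 2 + vu ^ 2 ≤ P)
    (hmax : ∀ x y : ℝ, 0 ≤ x → 0 ≤ y → x ^ 2 + y ^ 2 ≤ P → g x y ≤ g vj vu) :
    0 ≤ b * Real.sqrt P - a * vj := by
  by_contra h
  push_neg at h
  have hsP : 0 < Real.sqrt P := Real.sqrt_pos.mpr hP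
  set c := b * Real.sqrt P / a with hc
  have hc0 : 0 ≤ c := by positivity
  have hclt : c < vj := by
    rw [hc, div_lt_iff₀ ha]
    nlinarith
  have hfeas' : c ^ 2 + vu ^ 2 ≤ P := by nlinarith
  have hkey := hmax c vu hc0 hvu hfeas'
  have hcz : b * Real.sqrt P - a * c = 0 := by
    rw [hc, mul_div_assoc', mul_div_cancel_left₀ _ ha.ne', sub_self]
  rcases eq_or_lt_of_le hvu with hvu0 | hvu0
  · -- vu = 0, so g vj vu = 0; compare with (0, sqrt P)
    have hfeas2 : (0:ℝ) ^ 2 + Real.sqrt P ^ 2 ≤ P := by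
      rw [Real.sq_sqrt hP.le]; norm_num
    have := hmax 0 (Real.sqrt P) le_rfl hsP.le hfeas2
    rw [hg, hg, ← hvu0] at this
    have hden : 0 < σ ^ 2 + (b * Real.sqrt P - a * 0) ^ 2 := by positivity
    have hpos : 0 < a ^ 2 * Real.sqrt P ^ 2 / (σ ^ 2 + (b * Real.sqrt P - a * 0) ^ 2) := by
      apply div_pos _ hden
      positivity
    simp at this hpos
    nlinarith
  · rw [hg, hg, hcz] at hkey
    have hd1 : 0 < σ ^ 2 + (0:ℝ) ^ 2 := by positivity
    have hd2 : 0 < σ ^ 2 + (b * Real.sqrt P - a * vj) ^ 2 := by positivity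
    have hlt : a ^ 2 * vu ^ 2 / (σ ^ 2 + (b * Real.sqrt P - a * vj) ^ 2)
        < a ^ 2 * vu ^ 2 / (σ ^ 2 + (0:ℝ) ^ 2) := by
      apply div_lt_div_of_pos_left (by positivity) hd1
      nlinarith
    linarith
end

section
/- Let $a,b,\sigma,P>0$, $X = \sigma^2 + (a^2+b^2)P$, $Y = \sigma^2 + (b^2-a^2)P$, $v_j^\star = \frac{X - \sqrt{X^2 - 4a^2b^2P^2}}{2ab\sqrt{P}}$, $v_u^\star = \sqrt{P - (v_j^\star)^2}$, and $\eta^\star = \frac{-Y + \sqrt{Y^2 + 4\sigma^2 P a^2}}{2\sigma^2}$. Then $(v_j^\star, v_u^\star)$ satisfies $v_j^\star = \frac{\eta^\star b \sqrt{P}}{(\eta^\star + 1) a}$ and achieves SINR value $\frac{a^2 (v_u^\star)^2}{\sigma^2 + (b\sqrt{P} - a v_j^\star)^2} = \eta^\star$. -/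
theorem stmt_3 (a b σ P : ℝ) (ha : 0 < a) (hb : 0 < b) (hσ : 0 < σ) (hP : 0 < P)
    (X Y : ℝ) (hX : X = σ ^ 2 + (a ^ 2 + b ^ 2) * P) (hY : Y = σ ^ 2 + (b ^ 2 - a ^ 2) * P)
    (vj vu η : ℝ)
    (hvj : vj = (X - Real.sqrt (X ^ 2 - 4 * a ^ 2 * b ^ 2 * P ^ 2)) / (2 * a * b * Real.sqrt P))
    (hvu : vu = Real.sqrt (P - vj ^ 2))
    (hη : η = (-Y + Real.sqrt (Y ^ 2 + 4 * σ ^ 2 * P * a ^ 2)) / (2 * σ ^ 2)) :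
    vj = η * (b * Real.sqrt P) / ((η + 1) * a) ∧
      a ^ 2 * vu ^ 2 / (σ ^ 2 + (b * Real.sqrt P - a * vj) ^ 2) = η := by
  set s := Real.sqrt P with hs_def
  have hspos : 0 < s := Real.sqrt_pos.mpr hP
  have hs : s ^ 2 = P := Real.sq_sqrt hP.le
  have hDarg : Y ^ 2 + 4 * σ ^ 2 * P * a ^ 2 = X ^ 2 - 4 * a ^ 2 * b ^ 2 * P ^ 2 := by
    subst hX hY; ring
  rw [← hDarg] at hvj
  set D := Real.sqrt (Y ^ 2 + 4 * σ ^ 2 * P * a ^ 2) with hD_def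
  have hDnn : 0 ≤ D := Real.sqrt_nonneg _
  have hDsq : D ^ 2 = Y ^ 2 + 4 * σ ^ 2 * P * a ^ 2 := Real.sq_sqrt (by positivity)
  have hηeq : 2 * σ ^ 2 * η = -Y + D := by
    rw [hη]; field_simp
  subst hX hY
  have hquad : σ ^ 2 * η ^ 2 + (σ ^ 2 + (b ^ 2 - a ^ 2) * P) * η - a ^ 2 * P = 0 := by
    have h4 : 4 * σ ^ 2 * (σ ^ 2 * η ^ 2 + (σ ^ 2 + (b ^ 2 - a ^ 2) * P) * η - a ^ 2 * P)
        = 0 := by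
      linear_combination (2 * σ ^ 2 * η + (σ ^ 2 + (b ^ 2 - a ^ 2) * P) + D) * hηeq + hDsq
    have h5 := mul_eq_zero.mp h4
    rcases h5 with h5 | h5
    · exact absurd h5 (by positivity)
    · exact h5
  have hηpos : 0 < η := by
    by_contra h
    push_neg at h
    have hYD : D ≤ σ ^ 2 + (b ^ 2 - a ^ 2) * P := by nlinarith [hηeq]
    nlinarith [hDsq, hDnn, hYD, mul_nonneg hDnn (sub_nonneg.mpr hYD),
      mul_nonneg (hDnn.trans hYD) (sub_nonneg.mpr hYD),
      mul_pos (mul_pos hσ hσ) (mul_pos hP (mul_pos ha ha))]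
  have h2absne : (2 * a * b * s) ≠ 0 := by positivity
  have h3 : vj * (2 * a * b * s) = σ ^ 2 + (a ^ 2 + b ^ 2) * P - D := by
    rw [hvj, div_mul_cancel₀ _ h2absne]
  have h3' : 2 * a * b * s * vj = 2 * a ^ 2 * P - 2 * σ ^ 2 * η := by
    linear_combination h3 + hηeq
  have hkey : (η + 1) * a * vj = η * b * s := by
    have h2bs : (2 * b * s) ≠ 0 := by positivity
    apply mul_right_cancel₀ h2bs
    linear_combination (η + 1) * h3' - 2 * hquad - 2 * η * b ^ 2 * hs
  have hne : ((η + 1) * a) ≠ 0 := by positivity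
  have hvjf : vj = η * (b * s) / ((η + 1) * a) := by
    field_simp
    linear_combination hkey
  have hkeysq : ((η + 1) * a * vj) ^ 2 = (η * b * s) ^ 2 := by rw [hkey]
  have h5 : (η + 1) * (b * s - a * vj) = b * s := by linear_combination -hkey
  have h6 : (η + 1) ^ 2 * (σ ^ 2 + (b * s - a * vj) ^ 2)
      = (η + 1) ^ 2 * σ ^ 2 + b ^ 2 * P := by
    linear_combination ((η + 1) * (b * s - a * vj) + b * s) * h5 + b ^ 2 * hs
  have h7 : (η + 1) ^ 2 * (a ^ 2 * (P - vj ^ 2))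
      = (η + 1) ^ 2 * a ^ 2 * P - η ^ 2 * b ^ 2 * P := by
    linear_combination -hkeysq - η ^ 2 * b ^ 2 * hs
  have h8 : (η + 1) ^ 2 * a ^ 2 * P - η ^ 2 * b ^ 2 * P
      = η * ((η + 1) ^ 2 * σ ^ 2 + b ^ 2 * P) := by
    linear_combination (-(η + 1)) * hquad
  have hprod : (η + 1) ^ 2 * a ^ 2 * (P - vj ^ 2)
      = η * ((η + 1) ^ 2 * σ ^ 2 + b ^ 2 * P) := by
    linear_combination h7 + h8
  have hle : vj ^ 2 ≤ P := by
    have hposfac : (0:ℝ) < (η + 1) ^ 2 * a ^ 2 := by positivity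
    have h9 : 0 < (η + 1) ^ 2 * a ^ 2 * (P - vj ^ 2) := by
      rw [hprod]; exact mul_pos hηpos (by positivity)
    by_contra h
    push_neg at h
    have h10 : 0 ≤ (η + 1) ^ 2 * a ^ 2 * (vj ^ 2 - P) :=
      mul_nonneg hposfac.le (by linarith)
    have h11 : (η + 1) ^ 2 * a ^ 2 * (vj ^ 2 - P)
        = -((η + 1) ^ 2 * a ^ 2 * (P - vj ^ 2)) := by ring
    rw [h11] at h10
    linarith
  have hvu2 : vu ^ 2 = P - vj ^ 2 := by
    rw [hvu]; exact Real.sq_sqrt (by linarith)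
  refine ⟨hvjf, ?_⟩
  have hden : (0:ℝ) < σ ^ 2 + (b * s - a * vj) ^ 2 := by positivity
  rw [div_eq_iff hden.ne', hvu2]
  have hη1 : ((η + 1) ^ 2 : ℝ) ≠ 0 := by positivity
  apply mul_left_cancel₀ hη1
  linear_combination h7 - η * h6 + h8
end

section
/- Let $a,b,\sigma,P>0$, $Y=\sigma^2+(b^2-a^2)P$ and $\eta^\star(P) = \frac{-Y+\sqrt{Y^2+4\sigma^2 P a^2}}{2\sigma^2}$. Then for every feasible $(v_j, v_u)$ with $v_j, v_u \ge 0$ and $v_j^2+v_u^2 \le P$, it holds that $\frac{a^2 v_u^2}{\sigma^2 + (b\sqrt{P}-a v_j)^2} \le \eta^\star(P)$. -/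
theorem stmt_4 (a b σ P : ℝ) (ha : 0 < a) (hb : 0 < b) (hσ : 0 < σ) (hP : 0 < P)
    (Y η : ℝ) (hY : Y = σ ^ 2 + (b ^ 2 - a ^ 2) * P)
    (hη : η = (-Y + Real.sqrt (Y ^ 2 + 4 * σ ^ 2 * P * a ^ 2)) / (2 * σ ^ 2)) :
    ∀ vj vu : ℝ, 0 ≤ vj → 0 ≤ vu → vj ^ 2 + vu ^ 2 ≤ P →
      a ^ 2 * vu ^ 2 / (σ ^ 2 + (b * Real.sqrt P - a * vj) ^ 2) ≤ η := by
  intro vj vu hvj hvu hfeas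
  set s := Real.sqrt (Y ^ 2 + 4 * σ ^ 2 * P * a ^ 2) with hs
  have hpos : (0:ℝ) < 4 * σ ^ 2 * P * a ^ 2 := by positivity
  have hD : (0:ℝ) ≤ Y ^ 2 + 4 * σ ^ 2 * P * a ^ 2 := by nlinarith [sq_nonneg Y]
  have hs2 : s ^ 2 = Y ^ 2 + 4 * σ ^ 2 * P * a ^ 2 := Real.sq_sqrt hD
  have habs : |Y| ≤ s := by
    rw [← Real.sqrt_sq_eq_abs]
    exact Real.sqrt_le_sqrt (by linarith)
  have hsY : Y ≤ s := le_trans (le_abs_self Y) habs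
  have hη0 : 0 ≤ η := by
    rw [hη]
    apply div_nonneg (by linarith) (by positivity)
  have hkey : σ ^ 2 * η ^ 2 + Y * η = P * a ^ 2 := by
    have h2 : 2 * σ ^ 2 * η = -Y + s := by
      rw [hη]; field_simp
    have h3 : (2 * σ ^ 2 * η + Y) ^ 2 = s ^ 2 := by rw [h2]; ring
    rw [hs2] at h3
    have h4 : σ ^ 2 * (σ ^ 2 * η ^ 2 + Y * η - P * a ^ 2) = 0 := by
      linear_combination h3 / 4
    have h5 : σ ^ 2 * η ^ 2 + Y * η - P * a ^ 2 = 0 := by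
      rcases mul_eq_zero.mp h4 with h | h
      · exact absurd h (by positivity)
      · exact h
    linarith
  have hsP : Real.sqrt P ^ 2 = P := Real.sq_sqrt hP.le
  have hden : 0 < σ ^ 2 + (b * Real.sqrt P - a * vj) ^ 2 := by positivity
  rw [div_le_iff₀ hden]
  have hid : (η + 1) * (η * σ ^ 2 + η * (b * Real.sqrt P - a * vj) ^ 2
      - a ^ 2 * (P - vj ^ 2))
      = ((η + 1) * a * vj - η * b * Real.sqrt P) ^ 2
        + (σ ^ 2 * η ^ 2 + Y * η - P * a ^ 2) := by
    subst hY
    linear_combination (η * b ^ 2) * hsP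
  have hF0 : 0 ≤ η * σ ^ 2 + η * (b * Real.sqrt P - a * vj) ^ 2
      - a ^ 2 * (P - vj ^ 2) := by
    nlinarith [hid, sq_nonneg ((η + 1) * a * vj - η * b * Real.sqrt P), hkey, hη0]
  nlinarith [hF0, mul_le_mul_of_nonneg_left hfeas (sq_nonneg a)]
end

section
/- Let $a,b,\sigma>0$ be fixed, and for $P>0$ define $\tilde\rho_j(P) = \frac{v_j^\star(P)}{\sqrt{P}}$ where $v_j^\star(P) = \frac{X - \sqrt{X^2 - 4a^2b^2P^2}}{2ab\sqrt{P}}$ with $X = \sigma^2 + (a^2+b^2)P$. Then $\tilde\rho_j$ is strictly increasing in $P$ on $(0,\infty)$; consequently, the power allocation ratio for interference cancellation $\rho_j(P) = \tilde\rho_j(P)^2$ is strictly increasing in $P$, and $\rho_u(P)=1-\rho_j(P)$ is strictly decreasing. -/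
theorem stmt_5 (a b σ : ℝ) (ha : 0 < a) (hb : 0 < b) (hσ : 0 < σ)
    (ρt ρj ρu : ℝ → ℝ)
    (hρt : ∀ P, ρt P =
      ((σ ^ 2 + (a ^ 2 + b ^ 2) * P -
          Real.sqrt ((σ ^ 2 + (a ^ 2 + b ^ 2) * P) ^ 2 - 4 * a ^ 2 * b ^ 2 * P ^ 2)) /
        (2 * a * b * Real.sqrt P)) / Real.sqrt P)
    (hρj : ∀ P, ρj P = (ρt P) ^ 2) (hρu : ∀ P, ρu P = 1 - ρj P) :
    StrictMonoOn ρt (Set.Ioi 0) ∧ StrictMonoOn ρj (Set.Ioi 0) ∧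
      StrictAntiOn ρu (Set.Ioi 0) := by
  have hab : (0:ℝ) < 2 * a * b := by positivity
  -- auxiliary functions
  set h : ℝ → ℝ := fun P => σ ^ 2 / P + (a ^ 2 + b ^ 2) with hh
  set D : ℝ → ℝ := fun P => h P + Real.sqrt ((h P) ^ 2 - 4 * a ^ 2 * b ^ 2) with hD
  have hhpos : ∀ P, 0 < P → a ^ 2 + b ^ 2 ≤ h P := by
    intro P hP
    have : 0 < σ ^ 2 / P := by positivity
    simp [hh]; linarith
  have hknn : ∀ P, 0 < P → 0 ≤ (h P) ^ 2 - 4 * a ^ 2 * b ^ 2 := by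
    intro P hP
    have h1 := hhpos P hP
    nlinarith [sq_nonneg (a ^ 2 - b ^ 2), sq_nonneg a, sq_nonneg b]
  have hDpos : ∀ P, 0 < P → 0 < D P := by
    intro P hP
    have h1 := hhpos P hP
    have h2 : 0 ≤ Real.sqrt ((h P) ^ 2 - 4 * a ^ 2 * b ^ 2) := Real.sqrt_nonneg _
    have : 0 < h P := by nlinarith
    simp only [hD]; linarith
  -- the key algebraic identity
  have key : ∀ P, 0 < P → ρt P = 2 * a * b / D P := by
    intro P hP
    have hPne : P ≠ 0 := ne_of_gt hP
    have hX : σ ^ 2 + (a ^ 2 + b ^ 2) * P = P * h P := by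
      simp only [hh]
      rw [mul_add, mul_div_assoc', mul_comm P (σ ^ 2), mul_div_assoc, div_self hPne, mul_one]
      ring
    have hS : Real.sqrt ((σ ^ 2 + (a ^ 2 + b ^ 2) * P) ^ 2 - 4 * a ^ 2 * b ^ 2 * P ^ 2)
        = P * Real.sqrt ((h P) ^ 2 - 4 * a ^ 2 * b ^ 2) := by
      have : (σ ^ 2 + (a ^ 2 + b ^ 2) * P) ^ 2 - 4 * a ^ 2 * b ^ 2 * P ^ 2
          = P ^ 2 * ((h P) ^ 2 - 4 * a ^ 2 * b ^ 2) := by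
        rw [hX]; ring
      rw [this, Real.sqrt_mul (sq_nonneg P), Real.sqrt_sq hP.le]
    have hsq : Real.sqrt P * Real.sqrt P = P := Real.mul_self_sqrt hP.le
    set s := Real.sqrt ((h P) ^ 2 - 4 * a ^ 2 * b ^ 2) with hs
    have hs2 : s ^ 2 = (h P) ^ 2 - 4 * a ^ 2 * b ^ 2 := Real.sq_sqrt (hknn P hP)
    have hsP : 0 < Real.sqrt P := Real.sqrt_pos.mpr hP
    have hDP : 0 < D P := hDpos P hP
    rw [hρt, hS, hX]
    rw [div_div, mul_assoc, hsq]
    rw [div_eq_div_iff (by positivity) (ne_of_gt hDP)]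
    have : D P = h P + s := rfl
    rw [this]
    nlinarith [hs2]
  -- positivity of ρt on Ioi 0
  have hρtpos : ∀ P, 0 < P → 0 < ρt P := by
    intro P hP
    rw [key P hP]
    exact div_pos hab (hDpos P hP)
  -- strict monotonicity of ρt
  have hmono : StrictMonoOn ρt (Set.Ioi 0) := by
    intro P hP Q hQ hPQ
    have hP : (0:ℝ) < P := hP
    have hQ : (0:ℝ) < Q := hQ
    rw [key P hP, key Q hQ]
    have hhlt : h Q < h P := by
      have : σ ^ 2 / Q < σ ^ 2 / P :=
        div_lt_div_of_pos_left (by positivity) hP hPQ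
      simp only [hh]; linarith
    have hhQpos : 0 < h Q := by
      have := hhpos Q hQ; nlinarith
    have hslt : Real.sqrt ((h Q) ^ 2 - 4 * a ^ 2 * b ^ 2)
        ≤ Real.sqrt ((h P) ^ 2 - 4 * a ^ 2 * b ^ 2) := by
      apply Real.sqrt_le_sqrt
      nlinarith
    have hDlt : D Q < D P := by
      simp only [hD]; exact add_lt_add_of_lt_of_le hhlt hslt
    exact div_lt_div_of_pos_left hab (hDpos Q hQ) hDlt
  refine ⟨hmono, ?_, ?_⟩
  · intro P hP Q hQ hPQ
    rw [hρj, hρj]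
    exact pow_lt_pow_left₀ (hmono hP hQ hPQ) (hρtpos P hP).le two_ne_zero
  · intro P hP Q hQ hPQ
    rw [hρu, hρu]
    have : ρj P < ρj Q := by
      rw [hρj, hρj]
      exact pow_lt_pow_left₀ (hmono hP hQ hPQ) (hρtpos P hP).le two_ne_zero
    linarith
end

section
/- Let $a,b,\sigma>0$. With $\rho_j(P) = \left(\frac{X - \sqrt{X^2 - 4a^2b^2P^2}}{2abP}\right)^2$, $X = \sigma^2 + (a^2+b^2)P$, we have $\lim_{P\to\infty} \rho_j(P) = \min\{b^2/a^2,\ a^2/b^2\}$. -/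
theorem stmt_7 (a b σ : ℝ) (ha : 0 < a) (hb : 0 < b) (hσ : 0 < σ)
    (ρj : ℝ → ℝ)
    (hρj : ∀ P, ρj P =
      ((σ ^ 2 + (a ^ 2 + b ^ 2) * P -
          Real.sqrt ((σ ^ 2 + (a ^ 2 + b ^ 2) * P) ^ 2 - 4 * a ^ 2 * b ^ 2 * P ^ 2)) /
        (2 * a * b * P)) ^ 2) :
    Filter.Tendsto ρj Filter.atTop (nhds (min (b ^ 2 / a ^ 2) (a ^ 2 / b ^ 2))) := by
  set g : ℝ → ℝ := fun y =>
      ((σ^2*y + (a^2+b^2) - Real.sqrt ((σ^2*y+(a^2+b^2))^2 - 4*a^2*b^2))/(2*a*b))^2 with hgdef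
  have hg : Continuous g := by
    apply Continuous.pow
    apply Continuous.div_const
    exact (((continuous_const.mul continuous_id).add continuous_const).sub
      (Real.continuous_sqrt.comp
        ((((continuous_const.mul continuous_id).add continuous_const).pow 2).sub continuous_const)))
  have hval : g 0 = min (b ^ 2 / a ^ 2) (a ^ 2 / b ^ 2) := by
    have h1 : ((σ^2*0+(a^2+b^2))^2 - 4*a^2*b^2) = (a^2-b^2)^2 := by ring
    simp only [hgdef, h1, Real.sqrt_sq_eq_abs]
    rcases le_total a b with h | h
    · have habs : |a^2-b^2| = b^2 - a^2 := by
        rw [abs_of_nonpos (by nlinarith)]; ring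
      have hmin : min (b ^ 2 / a ^ 2) (a ^ 2 / b ^ 2) = a^2/b^2 := by
        rw [min_eq_right]
        rw [div_le_div_iff₀ (by positivity) (by positivity)]
        have h2 : a^2 ≤ b^2 := by nlinarith
        nlinarith
      rw [habs, hmin]
      field_simp
      ring
    · have habs : |a^2-b^2| = a^2 - b^2 := by
        rw [abs_of_nonneg (by nlinarith)]
      have hmin : min (b ^ 2 / a ^ 2) (a ^ 2 / b ^ 2) = b^2/a^2 := by
        rw [min_eq_left]
        rw [div_le_div_iff₀ (by positivity) (by positivity)]
        have h2 : b^2 ≤ a^2 := by nlinarith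
        nlinarith
      rw [habs, hmin]
      field_simp
      ring
  have htend : Filter.Tendsto (fun P : ℝ => g (1/P)) Filter.atTop
      (nhds (min (b ^ 2 / a ^ 2) (a ^ 2 / b ^ 2))) := by
    rw [← hval]
    apply (hg.tendsto 0).comp
    exact tendsto_inv_atTop_zero.congr fun x => (one_div x).symm
  apply htend.congr'
  filter_upwards [Filter.eventually_gt_atTop (0:ℝ)] with P hP
  have hP' : P ≠ 0 := ne_of_gt hP
  rw [hρj P, hgdef]
  have heq : (σ^2+(a^2+b^2)*P)^2 - 4*a^2*b^2*P^2
      = P^2 * ((σ^2*(1/P)+(a^2+b^2))^2 - 4*a^2*b^2) := by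
    field_simp
  rw [heq, Real.sqrt_mul (sq_nonneg P), Real.sqrt_sq hP.le]
  set s := Real.sqrt ((σ^2*(1/P)+(a^2+b^2))^2 - 4*a^2*b^2) with hs
  have hnum : σ^2+(a^2+b^2)*P - P * s = P * (σ^2*(1/P)+(a^2+b^2) - s) := by
    field_simp
  rw [hnum, show (2*a*b*P) = P*(2*a*b) by ring, mul_div_mul_left _ _ hP']
end

section
/- Let $a,b,\sigma>0$ with $a > b$, and $\eta^\star(P)$ as defined by $\eta^\star(P) = \frac{-Y(P)+\sqrt{Y(P)^2 + 4\sigma^2 P a^2}}{2\sigma^2}$ with $Y(P) = \sigma^2 + (b^2-a^2)P$. Then $\eta^\star(P) \to \infty$ as $P\to\infty$; moreover $\eta^\star(P) \ge \frac{(a^2-b^2)P - \sigma^2}{\sigma^2}$ for all $P > 0$. -/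
theorem stmt_9 (a b σ : ℝ) (ha : 0 < a) (hb : 0 < b) (hσ : 0 < σ) (hab : b < a)
    (Y η : ℝ → ℝ) (hY : ∀ P, Y P = σ ^ 2 + (b ^ 2 - a ^ 2) * P)
    (hη : ∀ P, η P = (-Y P + Real.sqrt ((Y P) ^ 2 + 4 * σ ^ 2 * P * a ^ 2)) / (2 * σ ^ 2)) :
    Filter.Tendsto η Filter.atTop Filter.atTop ∧
      ∀ P : ℝ, 0 < P → ((a ^ 2 - b ^ 2) * P - σ ^ 2) / σ ^ 2 ≤ η P := by
  have hσ2 : (0:ℝ) < σ ^ 2 := by positivity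
  have key : ∀ P : ℝ, 0 < P → ((a ^ 2 - b ^ 2) * P - σ ^ 2) / σ ^ 2 ≤ η P := by
    intro P hP
    rw [hη]
    have hc : (0:ℝ) ≤ 4 * σ ^ 2 * P * a ^ 2 := by positivity
    have hsq : -Y P ≤ Real.sqrt ((Y P) ^ 2 + 4 * σ ^ 2 * P * a ^ 2) := by
      calc -Y P ≤ |Y P| := neg_le_abs _
        _ = Real.sqrt ((Y P) ^ 2) := (Real.sqrt_sq_eq_abs _).symm
        _ ≤ _ := Real.sqrt_le_sqrt (by linarith)
    have hnum : 2 * ((a ^ 2 - b ^ 2) * P - σ ^ 2) ≤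
        -Y P + Real.sqrt ((Y P) ^ 2 + 4 * σ ^ 2 * P * a ^ 2) := by
      have : (a ^ 2 - b ^ 2) * P - σ ^ 2 = -Y P := by rw [hY]; ring
      linarith
    rw [div_le_div_iff₀ hσ2 (by positivity : (0:ℝ) < 2 * σ ^ 2)]
    nlinarith [hnum, hσ2.le]
  refine ⟨?_, key⟩
  have hlin : Filter.Tendsto (fun P => ((a ^ 2 - b ^ 2) * P - σ ^ 2) / σ ^ 2)
      Filter.atTop Filter.atTop := by
    apply Filter.Tendsto.atTop_div_const hσ2
    apply Filter.tendsto_atTop_add_const_right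
    exact Filter.Tendsto.const_mul_atTop (by nlinarith) Filter.tendsto_id
  apply Filter.tendsto_atTop_mono' _ _ hlin
  filter_upwards [Filter.eventually_gt_atTop 0] with P hP using key P hP
end

section
/- Let $a,b,\sigma,P>0$, $\eta^\star(P) = \frac{-Y+\sqrt{Y^2+4\sigma^2 P a^2}}{2\sigma^2}$ with $Y = \sigma^2+(b^2-a^2)P$, and $\eta_0(P) = \frac{Pa^2}{\sigma^2+Pb^2}$. Then $\eta^\star(P) \ge \eta_0(P)$ for all $P>0$. -/
theorem stmt_11 (a b σ P : ℝ) (ha : 0 < a) (hb : 0 < b) (hσ : 0 < σ) (hP : 0 < P)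
    (Y η η₀ : ℝ) (hY : Y = σ ^ 2 + (b ^ 2 - a ^ 2) * P)
    (hη : η = (-Y + Real.sqrt (Y ^ 2 + 4 * σ ^ 2 * P * a ^ 2)) / (2 * σ ^ 2))
    (hη₀ : η₀ = P * a ^ 2 / (σ ^ 2 + P * b ^ 2)) :
    η₀ ≤ η := by
  have harg : 0 ≤ Y ^ 2 + 4 * σ ^ 2 * P * a ^ 2 := by positivity
  set s := Real.sqrt (Y ^ 2 + 4 * σ ^ 2 * P * a ^ 2) with hs
  have hs0 : 0 ≤ s := Real.sqrt_nonneg _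
  have hs2 : s ^ 2 = Y ^ 2 + 4 * σ ^ 2 * P * a ^ 2 := Real.sq_sqrt harg
  have hD : (0:ℝ) < σ ^ 2 + P * b ^ 2 := by positivity
  have key : Y * (σ ^ 2 + P * b ^ 2) + 2 * σ ^ 2 * P * a ^ 2 ≤ s * (σ ^ 2 + P * b ^ 2) := by
    rcases le_or_gt (Y * (σ ^ 2 + P * b ^ 2) + 2 * σ ^ 2 * P * a ^ 2) 0 with h | h
    · exact h.trans (mul_nonneg hs0 hD.le)
    · have hsq : (Y * (σ ^ 2 + P * b ^ 2) + 2 * σ ^ 2 * P * a ^ 2) ^ 2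
          ≤ (s * (σ ^ 2 + P * b ^ 2)) ^ 2 := by
        have h4 : (0:ℝ) ≤ 4 * σ ^ 2 * P ^ 3 * a ^ 4 * b ^ 2 := by positivity
        have hid : (s * (σ ^ 2 + P * b ^ 2)) ^ 2
            - (Y * (σ ^ 2 + P * b ^ 2) + 2 * σ ^ 2 * P * a ^ 2) ^ 2
            = 4 * σ ^ 2 * P ^ 3 * a ^ 4 * b ^ 2 := by
          rw [hY] at hs2 ⊢
          linear_combination (σ ^ 2 + P * b ^ 2) ^ 2 * hs2
        linarith
      nlinarith [hsq, mul_nonneg hs0 hD.le]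
  rw [hη₀, hη, div_le_div_iff₀ hD (by positivity)]
  nlinarith [key]
end

section
/- Let $K \ge 1$, $a > 0$, $c_1,\dots,c_K \ge 0$, $\sigma, P > 0$. Set $S = a^2 - \sum_{j=1}^K c_j^2$ and $\eta^\star = \frac{-\sigma^2 + PS + \sqrt{(\sigma^2-PS)^2 + 4\sigma^2 P a^2}}{2\sigma^2}$. Define $v_j^\star = \frac{\eta^\star}{\eta^\star+1}\cdot\frac{c_j \sqrt{P}}{a}$ for each $j$. Then $\sum_{j=1}^K (v_j^\star)^2 \le P$ (so $v_u^\star = \sqrt{P - \sum_j (v_j^\star)^2}$ is well-defined), and $\frac{a^2 (v_u^\star)^2}{\sigma^2 + \sum_{j=1}^K (c_j\sqrt{P} - a v_j^\star)^2} = \eta^\star$. -/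
theorem stmt_13 (K : ℕ) (hK : 1 ≤ K) (a σ P : ℝ) (ha : 0 < a) (hσ : 0 < σ) (hP : 0 < P)
    (c : Fin K → ℝ) (hc : ∀ j, 0 ≤ c j)
    (S η : ℝ) (hS : S = a ^ 2 - ∑ j, (c j) ^ 2)
    (hη : η = (-σ ^ 2 + P * S + Real.sqrt ((σ ^ 2 - P * S) ^ 2 + 4 * σ ^ 2 * P * a ^ 2)) /
      (2 * σ ^ 2))
    (v : Fin K → ℝ) (hv : ∀ j, v j = η / (η + 1) * (c j * Real.sqrt P / a))
    (vu : ℝ) (hvu : vu = Real.sqrt (P - ∑ j, (v j) ^ 2)) :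
    (∑ j, (v j) ^ 2) ≤ P ∧
      a ^ 2 * vu ^ 2 / (σ ^ 2 + ∑ j, (c j * Real.sqrt P - a * v j) ^ 2) = η := by
  set C : ℝ := ∑ j, (c j) ^ 2 with hC
  have hCnn : 0 ≤ C := Finset.sum_nonneg fun j _ => sq_nonneg _
  clear_value C
  have hsP : Real.sqrt P ^ 2 = P := Real.sq_sqrt hP.le
  set r : ℝ := Real.sqrt ((σ ^ 2 - P * S) ^ 2 + 4 * σ ^ 2 * P * a ^ 2) with hr
  have hrnn : (0:ℝ) ≤ (σ ^ 2 - P * S) ^ 2 + 4 * σ ^ 2 * P * a ^ 2 := by positivity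
  have hr2 : r ^ 2 = (σ ^ 2 - P * S) ^ 2 + 4 * σ ^ 2 * P * a ^ 2 := Real.sq_sqrt hrnn
  have hr0 : 0 ≤ r := Real.sqrt_nonneg _
  clear_value r
  have hy : (0:ℝ) < 4 * σ ^ 2 * P * a ^ 2 := by positivity
  have hrpos : σ ^ 2 - P * S < r := by
    rcases le_or_gt (σ ^ 2 - P * S) 0 with h | h
    · have h3 : 0 < r := by rw [hr]; exact Real.sqrt_pos.mpr (by positivity)
      linarith
    · have hlt : (σ ^ 2 - P * S) ^ 2 < (σ ^ 2 - P * S) ^ 2 + 4 * σ ^ 2 * P * a ^ 2 := by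
        linarith
      have h3 := Real.sqrt_lt_sqrt (sq_nonneg _) hlt
      rw [Real.sqrt_sq h.le] at h3
      rw [hr]; exact h3
  have hηpos : 0 < η := by
    rw [hη]
    apply div_pos (by linarith) (by positivity)
  have hη1 : 0 < η + 1 := by linarith
  have hη1' : η + 1 ≠ 0 := ne_of_gt hη1
  have ha' : a ≠ 0 := ne_of_gt ha
  -- quadratic equation
  have h2 : 2 * σ ^ 2 * η = -σ ^ 2 + P * S + r := by
    rw [hη]; field_simp
  have key : (4 * σ ^ 2) * (σ ^ 2 * η ^ 2 + (σ ^ 2 - P * S) * η - P * a ^ 2) = 0 := by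
    linear_combination (2 * σ ^ 2 * η + σ ^ 2 - P * S + r) * h2 + hr2
  have hquad : σ ^ 2 * η ^ 2 + (σ ^ 2 - P * S) * η - P * a ^ 2 = 0 := by
    rcases mul_eq_zero.mp key with h | h
    · nlinarith
    · exact h
  have heq1 : σ ^ 2 * η * (η + 1) = P * (a ^ 2 * (η + 1) - C * η) := by
    rw [hS] at hquad; nlinarith [hquad]
  -- sum of v squares
  have hsum : ∑ j, (v j) ^ 2 = η ^ 2 * P * C / ((η + 1) ^ 2 * a ^ 2) := by
    rw [hC, Finset.mul_sum, Finset.sum_div]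
    refine Finset.sum_congr rfl fun j _ => ?_
    rw [hv, mul_pow, div_pow, div_pow, mul_pow, hsP]
    field_simp
  have h1 : (∑ j, (v j) ^ 2) ≤ P := by
    rw [hsum, div_le_iff₀ (by positivity)]
    have hPC : η ^ 2 * P * C = (P * a ^ 2 * η - σ ^ 2 * η ^ 2) * (η + 1) := by
      linear_combination η * heq1
    have hpos2 : (0:ℝ) ≤ (η + 1) * (P * a ^ 2 + σ ^ 2 * η ^ 2) :=
      mul_nonneg hη1.le (by positivity)
    linarith [hPC, hpos2, sq_nonneg η]
  refine ⟨h1, ?_⟩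
  have hvu2 : vu ^ 2 = P - ∑ j, (v j) ^ 2 := by
    rw [hvu, Real.sq_sqrt (by linarith)]
  have hden : ∑ j, (c j * Real.sqrt P - a * v j) ^ 2 = P * C / (η + 1) ^ 2 := by
    rw [hC, Finset.mul_sum, Finset.sum_div]
    refine Finset.sum_congr rfl fun j _ => ?_
    have hstep : c j * Real.sqrt P - a * v j = c j * Real.sqrt P / (η + 1) := by
      rw [hv]; field_simp; ring
    rw [hstep, div_pow, mul_pow, hsP]
    ring
  have hD : 0 < σ ^ 2 + P * C / (η + 1) ^ 2 := by
    have h4 : 0 ≤ P * C / (η + 1) ^ 2 := div_nonneg (mul_nonneg hP.le hCnn) (sq_nonneg _)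
    have h5 : 0 < σ ^ 2 := pow_pos hσ 2
    linarith
  have hDne : (σ ^ 2 + ∑ j, (c j * Real.sqrt P - a * v j) ^ 2) ≠ 0 := by
    rw [hden]; exact hD.ne'
  rw [div_eq_iff hDne]
  have hk : ((η + 1) ^ 2 : ℝ) ≠ 0 := pow_ne_zero 2 hη1'
  apply mul_right_cancel₀ hk
  have hL : a ^ 2 * vu ^ 2 * (η + 1) ^ 2 = P * a ^ 2 * (η + 1) ^ 2 - η ^ 2 * P * C := by
    rw [hvu2, hsum]; field_simp
  have hR : (σ ^ 2 + ∑ j, (c j * Real.sqrt P - a * v j) ^ 2) * (η + 1) ^ 2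
      = σ ^ 2 * (η + 1) ^ 2 + P * C := by
    rw [hden]; field_simp
  calc a ^ 2 * vu ^ 2 * (η + 1) ^ 2
      = P * a ^ 2 * (η + 1) ^ 2 - η ^ 2 * P * C := hL
    _ = η * (σ ^ 2 * (η + 1) ^ 2 + P * C) := by linear_combination (-(η + 1)) * heq1
    _ = η * ((σ ^ 2 + ∑ j, (c j * Real.sqrt P - a * v j) ^ 2) * (η + 1) ^ 2) := by rw [hR]
    _ = η * (σ ^ 2 + ∑ j, (c j * Real.sqrt P - a * v j) ^ 2) * (η + 1) ^ 2 := by ring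
end

section
/- Let $K \ge 1$, $a>0$, $c_1,\dots,c_K \ge 0$, $\sigma,P>0$, $S = a^2 - \sum_j c_j^2$, and $\eta^\star = \frac{-\sigma^2 + PS + \sqrt{(\sigma^2-PS)^2 + 4\sigma^2 P a^2}}{2\sigma^2}$. Then for all $v_1,\dots,v_K,v_u \ge 0$ with $\sum_j v_j^2 + v_u^2 \le P$, $\frac{a^2 v_u^2}{\sigma^2 + \sum_j (c_j\sqrt{P} - a v_j)^2} \le \eta^\star$. -/
theorem stmt_14 (K : ℕ) (hK : 1 ≤ K) (a σ P : ℝ) (ha : 0 < a) (hσ : 0 < σ) (hP : 0 < P)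
    (c : Fin K → ℝ) (hc : ∀ j, 0 ≤ c j)
    (S η : ℝ) (hS : S = a ^ 2 - ∑ j, (c j) ^ 2)
    (hη : η = (-σ ^ 2 + P * S + Real.sqrt ((σ ^ 2 - P * S) ^ 2 + 4 * σ ^ 2 * P * a ^ 2)) /
      (2 * σ ^ 2)) :
    ∀ (v : Fin K → ℝ) (vu : ℝ), (∀ j, 0 ≤ v j) → 0 ≤ vu →
      (∑ j, (v j) ^ 2) + vu ^ 2 ≤ P →
      a ^ 2 * vu ^ 2 / (σ ^ 2 + ∑ j, (c j * Real.sqrt P - a * v j) ^ 2) ≤ η := by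
  intro v vu hv hvu hsum
  set d : ℝ := (σ ^ 2 - P * S) ^ 2 + 4 * σ ^ 2 * P * a ^ 2 with hd
  have hd0 : 0 ≤ d := by positivity
  have h1 : Real.sqrt d ^ 2 = d := Real.sq_sqrt hd0
  have h2 : 0 ≤ Real.sqrt d := Real.sqrt_nonneg d
  have hσ2 : (0:ℝ) < σ ^ 2 := by positivity
  have hlt : σ ^ 2 - P * S < Real.sqrt d := by
    rcases le_or_gt 0 (σ ^ 2 - P * S) with h | h
    · have hlt2 : (σ ^ 2 - P * S) ^ 2 < d := by
        rw [hd]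
        nlinarith [mul_pos (mul_pos hσ2 hP) (pow_pos ha 2)]
      nlinarith [h1, h2, hlt2]
    · linarith [h2]
  have hηpos : 0 < η := by
    rw [hη]
    apply div_pos _ (by positivity)
    linarith
  have hη' : 2 * σ ^ 2 * η = -σ ^ 2 + P * S + Real.sqrt d := by
    rw [hη]; field_simp
  have hs : Real.sqrt d = 2 * σ ^ 2 * η + σ ^ 2 - P * S := by linarith
  have h3 : (2 * σ ^ 2 * η + σ ^ 2 - P * S) ^ 2 =
      (σ ^ 2 - P * S) ^ 2 + 4 * σ ^ 2 * P * a ^ 2 := by rw [← hs, h1]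
  have h4 : 4 * σ ^ 2 * (σ ^ 2 * η ^ 2 + (σ ^ 2 - P * S) * η - P * a ^ 2) = 0 := by
    linear_combination h3
  have hη2 : σ ^ 2 * η ^ 2 + (σ ^ 2 - P * S) * η - P * a ^ 2 = 0 := by
    have h4σ : (4 * σ ^ 2 : ℝ) ≠ 0 := by positivity
    exact (mul_eq_zero.mp h4).resolve_left h4σ
  have hsP : Real.sqrt P ^ 2 = P := Real.sq_sqrt hP.le
  set C2 : ℝ := ∑ j, (c j) ^ 2 with hC2
  set V2 : ℝ := ∑ j, (v j) ^ 2 with hV2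
  set Q : ℝ := ∑ j, (c j * Real.sqrt P - a * v j) ^ 2 with hQ
  have hQ0 : 0 ≤ Q := Finset.sum_nonneg fun j _ => sq_nonneg _
  have hD : 0 < σ ^ 2 + Q := by linarith
  have key : ∀ j : Fin K, η * P * (c j) ^ 2 - (η + 1) * a ^ 2 * (v j) ^ 2 ≤
      η * (η + 1) * (c j * Real.sqrt P - a * v j) ^ 2 := by
    intro j
    have e : η * (η + 1) * (c j * Real.sqrt P - a * v j) ^ 2 -
        (η * P * (c j) ^ 2 - (η + 1) * a ^ 2 * (v j) ^ 2) =
        (η * Real.sqrt P * c j - (η + 1) * a * v j) ^ 2 := by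
      linear_combination (η * (c j) ^ 2) * hsP
    linarith [e, sq_nonneg (η * Real.sqrt P * c j - (η + 1) * a * v j)]
  have hsum2 : η * P * C2 - (η + 1) * a ^ 2 * V2 ≤ η * (η + 1) * Q := by
    have h := Finset.sum_le_sum (fun j (_ : j ∈ Finset.univ) => key j)
    simpa [Finset.sum_sub_distrib, ← Finset.mul_sum, hC2, hV2, hQ] using h
  have h5 : 0 ≤ (η + 1) * (a ^ 2 * (P - (V2 + vu ^ 2))) := by
    apply mul_nonneg (by linarith)
    apply mul_nonneg (sq_nonneg a)
    linarith
  rw [hS] at hη2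
  have hstep : (η + 1) * (a ^ 2 * vu ^ 2) ≤ (η + 1) * (η * (σ ^ 2 + Q)) := by
    nlinarith [hη2, hsum2, h5]
  have hfinal : a ^ 2 * vu ^ 2 ≤ η * (σ ^ 2 + Q) :=
    le_of_mul_le_mul_left hstep (by linarith)
  rw [div_le_iff₀ hD]
  linarith
end
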